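/- arXiv:1909.07634 — 4 statements merged into one kernel-verified Lean document; each statement's English description precedes it below -/
import Mathlib

section
/- The Hankel determinant of the deformed Laguerre weight equals a Toeplitz determinant of K-Bessel functions: D_n(t) = det[μ_{j+k}(t)]_{j,k=0}^{n-1} = (-1)^{n(n-1)/2} 2^n t^{n(n+α)/2} det[K_{j-k+n+α}(2√t)]_{j,k=0}^{n-1}, for t > 0. -/
open MeasureTheory Set

/-- The modified Bessel function of the second kind,
`K_ν(z) = ∫_0^∞ e^{-z cosh u} cosh(ν u) du` for `z > 0`. -/
noncomputable def besselK (ν z : ℝ) : ℝ :=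
  ∫ u in Ioi (0 : ℝ), Real.exp (-z * Real.cosh u) * Real.cosh (ν * u)

/-!
The substitution `x = √t e^u` turns each moment into a Bessel integral,
`∫₀^∞ x^s e^{-x-t/x} dx = 2 t^{(s+1)/2} K_{s+1}(2√t)`, so the Hankel matrix factors as
`diag(t^{j/2}) · [K_{j+k+α+1}(2√t)] · diag(2 t^{(k+α+1)/2})`. Reversing the order of the
columns, a permutation of sign `(-1)^{n(n-1)/2}`, turns the middle Hankel matrix into the
Toeplitz matrix `[K_{j-k+n+α}(2√t)]`.
-/

lemma Fin.sign_revPerm (n : ℕ) :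
    Equiv.Perm.sign (Fin.revPerm : Equiv.Perm (Fin n)) = (-1) ^ (n * (n - 1) / 2) := by
  induction n with
  | zero => rfl
  | succ m ih =>
    have hrev : (Fin.revPerm : Equiv.Perm (Fin (m + 1)))
        = Equiv.Perm.decomposeFin.symm (0, Fin.revPerm) * finRotate (m + 1) := by
      ext i
      refine Fin.lastCases ?_ (fun x => ?_) i
      · simp [Fin.rev_last]
      · simp [Fin.coeSucc_eq_succ, Fin.rev_castSucc]
    have htri : (m + 1) * m / 2 = m * (m - 1) / 2 + m := by
      have := Finset.sum_range_id (m + 1)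
      rw [Finset.sum_range_succ, Finset.sum_range_id, Nat.add_sub_cancel] at this
      omega
    rw [hrev, map_mul, Equiv.Perm.decomposeFin.symm_sign, if_pos rfl, one_mul, ih,
      sign_finRotate, Nat.add_sub_cancel, htri, pow_add]

lemma Matrix.det_submatrix_id_rev {R : Type*} [CommRing R] {n : ℕ}
    (M : Matrix (Fin n) (Fin n) R) :
    (M.submatrix id Fin.rev).det = (-1) ^ (n * (n - 1) / 2) * M.det := by
  have := Matrix.det_permute' Fin.revPerm M
  rw [Fin.sign_revPerm] at this
  push_cast at this
  exact this

lemma Matrix.det_of_mul_mul {ι R : Type*} [Fintype ι] [DecidableEq ι] [CommRing R]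
    (u v : ι → R) (A : Matrix ι ι R) :
    (Matrix.of fun i j => u i * v j * A i j).det = (∏ i, u i) * (∏ j, v j) * A.det := by
  simp_rw [mul_assoc]
  exact (Matrix.det_mul_column u _).trans (congrArg _ (Matrix.det_mul_row v A))

lemma Fin.sum_val_cast {K : Type*} [Field K] [CharZero K] (n : ℕ) :
    ∑ k : Fin n, (k : K) = n * (n - 1) / 2 := by
  induction n with
  | zero => simp
  | succ m ih =>
    rw [Fin.sum_univ_castSucc]
    simp only [Fin.val_castSucc, ih, Fin.val_last, Nat.cast_add, Nat.cast_one,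
      add_sub_cancel_right]
    ring

lemma Real.sq_div_four_le_cosh (u : ℝ) : u ^ 2 / 4 ≤ Real.cosh u := by
  have hexp : |u| ^ 2 / 2 ≤ Real.exp |u| := by
    simpa using Real.pow_div_factorial_le_exp _ (abs_nonneg u) 2
  rw [← Real.cosh_abs, Real.cosh_eq, ← sq_abs]
  linarith [Real.exp_pos (-|u|)]

lemma integrable_exp_mul_sub_mul_cosh {z : ℝ} (hz : 0 < z) (ν : ℝ) :
    Integrable fun u : ℝ => Real.exp (ν * u - z * Real.cosh u) := by
  -- `z cosh u ≥ z u² / 4` gives a Gaussian majorant.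
  have hbound : ∀ u : ℝ, ν * u - z * Real.cosh u ≤ 2 * ν ^ 2 / z + -(z / 8) * u ^ 2 := by
    intro u
    have hcosh := mul_le_mul_of_nonneg_left (Real.sq_div_four_le_cosh u) hz.le
    rw [div_add' _ _ _ hz.ne', le_div_iff₀ hz]
    nlinarith [sq_nonneg (z * u - 4 * ν)]
  refine ((integrable_exp_neg_mul_sq (by positivity : 0 < z / 8)).const_mul
    (Real.exp (2 * ν ^ 2 / z))).mono' (by fun_prop) (Filter.Eventually.of_forall fun u => ?_)
  rw [Real.norm_of_nonneg (Real.exp_pos _).le, ← Real.exp_add]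
  exact Real.exp_le_exp.mpr (hbound u)

lemma integral_exp_mul_sub_mul_cosh {z : ℝ} (hz : 0 < z) (ν : ℝ) :
    ∫ u : ℝ, Real.exp (ν * u - z * Real.cosh u) = 2 * besselK ν z := by
  have hint := integrable_exp_mul_sub_mul_cosh hz
  have hsymm : ∀ u : ℝ,
      Real.exp ((-ν) * u - z * Real.cosh u) + Real.exp (ν * u - z * Real.cosh u) =
        2 * (Real.exp (-z * Real.cosh u) * Real.cosh (ν * u)) := by
    intro u
    rw [Real.cosh_eq (ν * u)]
    simp only [sub_eq_add_neg, Real.exp_add, neg_mul]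
    ring
  rw [← intervalIntegral.integral_Iic_add_Ioi (hint ν).integrableOn (hint ν).integrableOn,
    ← integral_comp_neg_Ioi, neg_zero, besselK, ← integral_const_mul,
    ← integral_add ?_ (hint ν).integrableOn]
  · refine setIntegral_congr_fun measurableSet_Ioi fun u _ => ?_
    simpa [Real.cosh_neg] using hsymm u
  · refine Integrable.integrableOn ?_
    simpa [Real.cosh_neg] using hint (-ν)

lemma integral_Ioi_zero_eq_integral_comp_mul_exp {E : Type*} [NormedAddCommGroup E]
    [NormedSpace ℝ E] (g : ℝ → E) {a : ℝ} (ha : 0 < a) :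
    ∫ x in Ioi (0 : ℝ), g x = ∫ u : ℝ, (a * Real.exp u) • g (a * Real.exp u) := by
  have himage : (fun u => a * Real.exp u) '' univ = Ioi 0 := by
    rw [← Function.comp_def (a * ·), image_comp, image_univ, Real.range_exp,
      image_const_mul_Ioi_zero ha]
  rw [← himage, integral_image_eq_integral_abs_deriv_smul MeasurableSet.univ
      (fun u _ => ((Real.hasDerivAt_exp u).const_mul a).hasDerivWithinAt)
      (fun u _ v _ h => Real.exp_injective (mul_left_cancel₀ ha.ne' h)), Measure.restrict_univ]
  simp_rw [abs_of_pos (mul_pos ha (Real.exp_pos _))]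

lemma integral_rpow_mul_exp_neg_sub_div {t : ℝ} (ht : 0 < t) (s : ℝ) :
    ∫ x in Ioi (0 : ℝ), x ^ s * Real.exp (-x - t / x)
      = 2 * t ^ ((s + 1) / 2) * besselK (s + 1) (2 * Real.sqrt t) := by
  obtain ⟨a, ha, rfl⟩ : ∃ a, 0 < a ∧ t = a ^ 2 :=
    ⟨√t, Real.sqrt_pos.2 ht, (Real.sq_sqrt ht.le).symm⟩
  have hsubst : ∀ u : ℝ, (a * Real.exp u) • ((a * Real.exp u) ^ s *
      Real.exp (-(a * Real.exp u) - a ^ 2 / (a * Real.exp u)))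
      = a ^ (s + 1) * Real.exp ((s + 1) * u - 2 * a * Real.cosh u) := by
    intro u
    have hpow : (a * Real.exp u) ^ s = a ^ s * Real.exp (s * u) := by
      rw [Real.mul_rpow ha.le (Real.exp_pos u).le, ← Real.exp_mul, mul_comm u]
    have hdiv : a ^ 2 / (a * Real.exp u) = a * Real.exp (-u) := by
      rw [Real.exp_neg]
      field_simp
    have hexponent : (s + 1) * u - 2 * a * Real.cosh u
        = u + s * u + (-(a * Real.exp u) - a * Real.exp (-u)) := by
      rw [Real.cosh_eq]
      ring
    rw [smul_eq_mul, hpow, hdiv, Real.rpow_add_one ha.ne', hexponent, Real.exp_add,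
      Real.exp_add]
    ring
  rw [integral_Ioi_zero_eq_integral_comp_mul_exp _ ha]
  simp_rw [hsubst]
  rw [integral_const_mul, integral_exp_mul_sub_mul_cosh (by positivity), Real.sqrt_sq ha.le,
    ← Real.rpow_natCast, ← Real.rpow_mul ha.le]
  ring_nf

theorem hankel_det_eq_besselK_toeplitz_general (t α : ℝ) (ht : 0 < t) (n : ℕ) :
    Matrix.det (Matrix.of fun j k : Fin n =>
        ∫ x in Ioi (0 : ℝ), x ^ (((j : ℕ) + (k : ℕ) : ℝ) + α) * Real.exp (-x - t / x))
      = (-1) ^ (n * (n - 1) / 2) * 2 ^ n * t ^ ((n * (n + α)) / 2) *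
        Matrix.det (Matrix.of fun j k : Fin n =>
          besselK (((j : ℕ) : ℝ) - ((k : ℕ) : ℝ) + n + α) (2 * Real.sqrt t)) := by
  set T : Matrix (Fin n) (Fin n) ℝ := Matrix.of fun j k : Fin n =>
    besselK (((j : ℕ) : ℝ) - ((k : ℕ) : ℝ) + n + α) (2 * Real.sqrt t)
  have hentries : (Matrix.of fun j k : Fin n =>
      ∫ x in Ioi (0 : ℝ), x ^ (((j : ℕ) + (k : ℕ) : ℝ) + α) * Real.exp (-x - t / x))
      = Matrix.of fun j k : Fin n => t ^ (((j : ℕ) : ℝ) / 2) *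
          (2 * t ^ ((((k : ℕ) : ℝ) + α + 1) / 2)) * T.submatrix id Fin.rev j k := by
    ext j k
    have hrev : ((Fin.rev k : ℕ) : ℝ) = n - 1 - k := by
      rw [Fin.val_rev, Nat.cast_sub k.isLt]
      push_cast
      ring
    simp only [T, Matrix.of_apply, Matrix.submatrix_apply, id, hrev]
    rw [integral_rpow_mul_exp_neg_sub_div ht,
      show ((j : ℝ) + k + α + 1) / 2 = (j : ℝ) / 2 + (k + α + 1) / 2 by ring,
      Real.rpow_add ht]
    ring_nf
  have hweights : (∏ j : Fin n, t ^ (((j : ℕ) : ℝ) / 2)) *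
      ∏ k : Fin n, 2 * t ^ ((((k : ℕ) : ℝ) + α + 1) / 2)
      = 2 ^ n * t ^ (n * (n + α) / 2) := by
    rw [Finset.prod_mul_distrib, Finset.prod_const, Finset.card_univ, Fintype.card_fin,
      ← Real.rpow_sum_of_pos ht, ← Real.rpow_sum_of_pos ht, mul_left_comm,
      ← Real.rpow_add ht]
    simp only [← Finset.sum_div, Finset.sum_add_distrib, Fin.sum_val_cast, Finset.sum_const,
      Finset.card_univ, Fintype.card_fin, nsmul_eq_mul]
    ring_nf
  rw [hentries, Matrix.det_of_mul_mul, Matrix.det_submatrix_id_rev, hweights]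
  ring

/-- The Hankel determinant of the moments of the deformed Laguerre weight equals a
Toeplitz determinant of `K`-Bessel functions:
`D_n(t) = (-1)^{n(n-1)/2} 2^n t^{n(n+α)/2} det[K_{j-k+n+α}(2√t)]`. -/
theorem hankel_det_eq_besselK_toeplitz (t α : ℝ) (ht : 0 < t) (n : ℕ) (hn : 0 < n) :
    Matrix.det (Matrix.of fun j k : Fin n =>
        ∫ x in Ioi (0 : ℝ), x ^ (((j : ℕ) + (k : ℕ) : ℝ) + α) * Real.exp (-x - t / x))
      = (-1) ^ (n * (n - 1) / 2) * 2 ^ n * t ^ ((n * (n + α)) / 2) *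
        Matrix.det (Matrix.of fun j k : Fin n =>
          besselK (((j : ℕ) : ℝ) - ((k : ℕ) : ℝ) + n + α) (2 * Real.sqrt t)) :=
  hankel_det_eq_besselK_toeplitz_general t α ht n
end

section
/- If h(t) satisfies (t h'')² + (4(h')² − 1)(t h' − h) + v₁v₂ h' − (v₁² + v₂²)/4 = 0 with (v₁, v₂) = (2n+α, −α), then y(t) = h(t) + t/2 − α²/4 satisfies (t y'')² = (n − (2n+α)y')² − 4(n(n+α) + t y' − y) y' (y' − 1). -/
open Filter Topology

section AffineShift

variable {𝕜 : Type*} [NontriviallyNormedField 𝕜] {f : 𝕜 → 𝕜} {x : 𝕜}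

theorem deriv_add_mul_add (hf : DifferentiableAt 𝕜 f x) (a b : 𝕜) :
    deriv (fun s => f s + a * s + b) x = deriv f x + a := by
  have hline : HasDerivAt (fun s => a * s) a x := by
    simpa using (hasDerivAt_id x).const_mul a
  exact ((hf.hasDerivAt.add hline).add_const b).deriv

theorem deriv_deriv_add_mul_add (hf : ∀ᶠ s in 𝓝 x, DifferentiableAt 𝕜 f s) (a b : 𝕜) :
    deriv (deriv fun s => f s + a * s + b) x = deriv (deriv f) x := by
  have hderiv : deriv (fun s => f s + a * s + b) =ᶠ[𝓝 x] fun s => deriv f s + a :=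
    hf.mono fun s hs => deriv_add_mul_add hs a b
  rw [hderiv.deriv_eq, deriv_add_const]

end AffineShift

/-- If `h` satisfies `(t h'')² + (4(h')² − 1)(t h' − h) + v₁v₂ h' − (v₁² + v₂²)/4 = 0`
with `(v₁, v₂) = (2n+α, −α)`, then `y(t) = h(t) + t/2 − α²/4` satisfies
`(t y'')² = (n − (2n+α)y')² − 4(n(n+α) + t y' − y) y' (y' − 1)`. -/
theorem h_to_sigmaPIII'_LUE (n : ℕ) (α : ℝ) (h y : ℝ → ℝ)
    (hd1 : ∀ t > (0 : ℝ), DifferentiableAt ℝ h t)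
    (heq : ∀ t > (0 : ℝ),
      (t * deriv (deriv h) t) ^ 2
        + (4 * (deriv h t) ^ 2 - 1) * (t * deriv h t - h t)
        + (2 * n + α) * (-α) * deriv h t - ((2 * n + α) ^ 2 + α ^ 2) / 4 = 0)
    (hy : ∀ t : ℝ, y t = h t + t / 2 - α ^ 2 / 4) :
    ∀ t > (0 : ℝ),
      (t * deriv (deriv y) t) ^ 2
        = ((n : ℝ) - (2 * n + α) * deriv y t) ^ 2
          - 4 * ((n : ℝ) * (n + α) + t * deriv y t - y t) * deriv y t * (deriv y t - 1) := by
  intro t ht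
  have hy_fun : y = fun s => h s + 2⁻¹ * s + -(α ^ 2 / 4) := by
    funext s
    rw [hy s]
    ring
  have hd_near : ∀ᶠ s in 𝓝 t, DifferentiableAt ℝ h s :=
    eventually_of_mem (Ioi_mem_nhds ht) hd1
  rw [hy_fun, deriv_deriv_add_mul_add hd_near, deriv_add_mul_add (hd1 t ht)]
  -- With `y' = h' + 1/2`, `4 y' (y' - 1) = 4 h'² - 1` and `n (n + α) + α² / 4 = (2n + α)² / 4`,
  -- so the two equations agree term by term.
  linear_combination heq t ht
end

section
/- Compatibility of the two equations for F: if F is a differentiable function satisfying 2F + F' − 4tF' − 6t(F')² + 4FF' = 1 on an interval, then F also satisfies (1 − F')² − 4F'(F' + 1)(tF' − F) = 0 on that interval, provided the second equation holds at one point (e.g. F has a power series at 0 with F(0)=0). -/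
/-!
Write (A) as `eqA t F F' = 0`: a quadratic in `F'` whose coefficients are affine in `(t, F)`.
By Darboux, `F'` cannot jump between the finitely many roots of this quadratic, so it is
continuous; where `∂eqA/∂u ≠ 0`, the implicit function argument makes it differentiable. For
`B(t, y, u)` one has `∂B/∂t + u ∂B/∂y = 0` and `∂B/∂u = 2 eqA` identically, so `t ↦ B(t, F, F')`
has derivative `2 eqA · F'' = 0` there. At a point where `∂eqA/∂u = 0` the discriminant of the
quadratic, which equals `(∂eqA/∂u)² ≥ 0` along the solution, attains the minimum `0`; its
derivative then vanishes as well, and these three equations force `t = 3/4`. So `B(t, F, F')`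
is continuous with zero derivative off one point, hence constant.
-/

open Set Filter Topology

theorem finite_setOf_quadratic_eq_zero {a b c : ℝ} (h : ¬(a = 0 ∧ b = 0 ∧ c = 0)) :
    {x : ℝ | a * x ^ 2 + b * x + c = 0}.Finite := by
  open Polynomial in
  have hp : C a * X ^ 2 + C b * X + C c ≠ 0 := by
    intro hp
    have hev (x : ℝ) : a * x ^ 2 + b * x + c = 0 := by simpa using congrArg (eval x) hp
    have := hev 0; have := hev 1; have := hev (-1)
    exact h ⟨by linarith, by linarith, by linarith⟩
  exact (Polynomial.finite_setOfPred_isRoot hp).subset fun x hx => by simpa using hx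

theorem continuousAt_deriv_of_eventually_eq_zero {f : ℝ → ℝ} {x : ℝ} {P : ℝ → ℝ → ℝ}
    (hf : ∀ᶠ s in 𝓝 x, DifferentiableAt ℝ f s) (hP : ∀ c, ContinuousAt (fun s => P s c) x)
    (hfin : {c | P x c = 0}.Finite) (hroot : ∀ᶠ s in 𝓝 x, P s (deriv f s) = 0) :
    ContinuousAt (deriv f) x := by
  have side (c : ℝ) (hc : P x c ≠ 0) : ∀ᶠ s in 𝓝 x, (deriv f s < c ↔ deriv f x < c) := by
    obtain ⟨ε, hε, hball⟩ := Metric.eventually_nhds_iff_ball.1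
      (hf.and (hroot.and ((hP c).eventually_ne hc)))
    have hne : ∀ s ∈ Metric.ball x ε, deriv f s ≠ c := fun s hs h =>
      (hball s hs).2.2 (h ▸ (hball s hs).2.1)
    filter_upwards [Metric.ball_mem_nhds x hε] with s hs
    rcases hasDerivWithinAt_forall_lt_or_forall_gt_of_forall_ne (convex_ball x ε)
      (fun s hs => (hball s hs).1.hasDerivAt.hasDerivWithinAt) hne with hlt | hgt
    · exact iff_of_true (hlt s hs) (hlt x (Metric.mem_ball_self hε))
    · exact iff_of_false (hgt s hs).not_gt (hgt x (Metric.mem_ball_self hε)).not_gt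
  refine tendsto_order.2 ⟨fun a ha => ?_, fun a ha => ?_⟩
  · obtain ⟨c, ⟨hac, hcx⟩, hc⟩ := ((Ioo_infinite ha).sdiff hfin).nonempty
    filter_upwards [side c hc] with s hs
    exact hac.trans_le (not_lt.1 fun h => hcx.not_gt (hs.1 h))
  · obtain ⟨c, ⟨hxc, hca⟩, hc⟩ := ((Ioo_infinite ha).sdiff hfin).nonempty
    filter_upwards [side c hc] with s hs
    exact (hs.2 hxc).trans hca

theorem hasDerivAt_of_slope_mul_eventuallyEq {u D N : ℝ → ℝ} {x d n : ℝ}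
    (hD : Tendsto D (𝓝[≠] x) (𝓝 d)) (hd : d ≠ 0) (hN : Tendsto N (𝓝[≠] x) (𝓝 n))
    (h : ∀ᶠ s in 𝓝[≠] x, slope u x s * D s = N s) : HasDerivAt u (n / d) x := by
  rw [hasDerivAt_iff_tendsto_slope]
  refine (hN.div hD hd).congr' ?_
  filter_upwards [h, hD.eventually_ne hd] with s hs hDs
  rw [Pi.div_apply, ← hs, mul_div_cancel_right₀ _ hDs]

theorem eq_of_hasDerivAt_zero_off_countable {E : Type*} [NormedAddCommGroup E] [NormedSpace ℝ E]
    [CompleteSpace E] {g : ℝ → E} {I Z : Set ℝ} (hI : I.OrdConnected) (hZ : Z.Countable)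
    (hg : ContinuousOn g I) (hg' : ∀ x ∈ I \ Z, HasDerivAt g 0 x) {x y : ℝ} (hx : x ∈ I)
    (hy : y ∈ I) : g x = g y := by
  have hsub : uIcc x y ⊆ I := hI.uIcc_subset hx hy
  have := MeasureTheory.integral_eq_of_hasDerivAt_off_countable g 0 hZ (hg.mono hsub)
    (fun s hs => hg' s ⟨hsub (Ioo_subset_Icc_self hs.1), hs.2⟩) intervalIntegrable_const
  simpa [sub_eq_zero, eq_comm] using this

-- `y` and `u` stand for `F t` and `deriv F t`.
def eqA (t y u : ℝ) : ℝ := 2 * y + u - 4 * t * u - 6 * t * u ^ 2 + 4 * y * u - 1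

def eqB (t y u : ℝ) : ℝ := (1 - u) ^ 2 - 4 * u * (u + 1) * (t * u - y)

def eqADerivU (t y u : ℝ) : ℝ := 1 - 4 * t + 4 * y - 12 * t * u

def eqADiscrim (t y : ℝ) : ℝ := (1 - 4 * t + 4 * y) ^ 2 + 24 * t * (2 * y - 1)

theorem eqA_sub_eqA (s x y₁ y₂ u₁ u₂ : ℝ) :
    eqA s y₁ u₁ - eqA x y₂ u₂ = (s - x) * (-4 * u₁ - 6 * u₁ ^ 2) + (y₁ - y₂) * (2 + 4 * u₁)
      + (u₁ - u₂) * (1 - 4 * x + 4 * y₂ - 6 * x * (u₁ + u₂)) := by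
  unfold eqA; ring

theorem eqADiscrim_eq_sq {t y u : ℝ} (h : eqA t y u = 0) :
    eqADiscrim t y = eqADerivU t y u ^ 2 := by
  unfold eqADiscrim eqADerivU; unfold eqA at h; linear_combination 24 * t * h

theorem eq_three_fourths_of_eqADerivU_eq_zero {t y u : ℝ} (h : eqA t y u = 0)
    (hu : eqADerivU t y u = 0)
    (hd : 8 * (1 - 4 * t + 4 * y) * (u - 1) + 24 * (2 * y - 1) + 48 * t * u = 0) : t = 3 / 4 := by
  unfold eqA at h; unfold eqADerivU at hu
  linear_combination -h + (2 * u + 1) / 4 * hu + hd / 16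

theorem hasDerivAt_eqB {F U : ℝ → ℝ} {x m : ℝ} (hF : HasDerivAt F (U x) x)
    (hU : HasDerivAt U m x) :
    HasDerivAt (fun t => eqB t (F t) (U t)) (2 * eqA x (F x) (U x) * m) x := by
  unfold eqB eqA
  have := ((hasDerivAt_const x (1 : ℝ)).sub hU).pow 2 |>.sub
    ((((hasDerivAt_const x (4 : ℝ)).mul hU).mul (hU.add_const 1)).mul
      (((hasDerivAt_id x).mul hU).sub hF))
  refine this.congr_deriv ?_
  simp only [Pi.sub_apply, Pi.mul_apply, id_eq]
  ring

theorem finite_setOf_eqA_eq_zero (t y : ℝ) : {u | eqA t y u = 0}.Finite := by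
  have h : ¬(-6 * t = 0 ∧ 1 - 4 * t + 4 * y = 0 ∧ 2 * y - 1 = 0) := by
    rintro ⟨h₂, h₁, h₀⟩; linarith
  convert finite_setOf_quadratic_eq_zero h using 3 with u
  unfold eqA; ring_nf

section

variable {F : ℝ → ℝ} {I : Set ℝ} {x : ℝ}

theorem continuousAt_deriv_of_eqA (hI : IsOpen I) (hF : ∀ t ∈ I, DifferentiableAt ℝ F t)
    (hA : ∀ t ∈ I, eqA t (F t) (deriv F t) = 0) (hx : x ∈ I) : ContinuousAt (deriv F) x := by
  have hFx : ContinuousAt F x := (hF x hx).continuousAt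
  refine continuousAt_deriv_of_eventually_eq_zero (P := fun s c => eqA s (F s) c)
    (eventually_of_mem (hI.mem_nhds hx) hF) (fun c => ?_) (finite_setOf_eqA_eq_zero x (F x))
    (eventually_of_mem (hI.mem_nhds hx) hA)
  unfold eqA; fun_prop

theorem hasDerivAt_deriv_of_eqA (hI : IsOpen I) (hF : ∀ t ∈ I, DifferentiableAt ℝ F t)
    (hA : ∀ t ∈ I, eqA t (F t) (deriv F t) = 0) (hx : x ∈ I)
    (hQ : eqADerivU x (F x) (deriv F x) ≠ 0) :
    HasDerivAt (deriv F)
      ((2 * deriv F x ^ 2 + 2 * deriv F x) / eqADerivU x (F x) (deriv F x)) x := by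
  set u := deriv F
  have hu : Tendsto u (𝓝[≠] x) (𝓝 (u x)) :=
    (continuousAt_deriv_of_eqA hI hF hA hx).tendsto.mono_left nhdsWithin_le_nhds
  have hslope : Tendsto (slope F x) (𝓝[≠] x) (𝓝 (u x)) :=
    hasDerivAt_iff_tendsto_slope.1 (hF x hx).hasDerivAt
  refine hasDerivAt_of_slope_mul_eventuallyEq
    (D := fun s => 1 - 4 * x + 4 * F x - 6 * x * (u s + u x))
    (N := fun s => -((-4 * u s - 6 * u s ^ 2) + slope F x s * (2 + 4 * u s)))
    ?_ hQ ?_ ?_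
  · convert ((hu.add tendsto_const_nhds).const_mul (6 * x)).const_sub (1 - 4 * x + 4 * F x)
      using 2
    unfold eqADerivU; ring
  · convert (((hu.const_mul 4).neg.sub ((hu.pow 2).const_mul 6)).add
      (hslope.mul ((hu.const_mul 4).const_add 2))).neg using 2 <;> ring
  · filter_upwards [self_mem_nhdsWithin, nhdsWithin_le_nhds (hI.mem_nhds hx)] with s hs hsI
    have hsx : s - x ≠ 0 := sub_ne_zero.2 hs
    have h := eqA_sub_eqA s x (F s) (F x) (u s) (u x)
    rw [hA s hsI, hA x hx] at h
    rw [slope_def_field, slope_def_field]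
    field_simp
    linear_combination -h

theorem eq_three_fourths_of_eqADerivU_deriv_eq_zero (hI : IsOpen I)
    (hF : ∀ t ∈ I, DifferentiableAt ℝ F t) (hA : ∀ t ∈ I, eqA t (F t) (deriv F t) = 0) (hx : x ∈ I)
    (hQ : eqADerivU x (F x) (deriv F x) = 0) : x = 3 / 4 := by
  have hmin : IsLocalMin (fun t => eqADiscrim t (F t)) x := by
    filter_upwards [hI.mem_nhds hx] with t ht
    rw [eqADiscrim_eq_sq (hA t ht), eqADiscrim_eq_sq (hA x hx), hQ, zero_pow two_ne_zero]
    positivity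
  have hF' := (hF x hx).hasDerivAt
  have hderiv : HasDerivAt (fun t => eqADiscrim t (F t))
      (8 * (1 - 4 * x + 4 * F x) * (deriv F x - 1) + 24 * (2 * F x - 1) + 48 * x * deriv F x)
      x := by
    unfold eqADiscrim
    have := ((((hasDerivAt_id x).const_mul 4).const_sub 1).add (hF'.const_mul 4)).pow 2 |>.add
      (((hasDerivAt_id x).const_mul 24).mul ((hF'.const_mul 2).sub_const 1))
    refine this.congr_deriv ?_
    simp only [Pi.add_apply, id_eq]
    ring
  exact eq_three_fourths_of_eqADerivU_eq_zero (hA x hx) hQ (hmin.hasDerivAt_eq_zero hderiv)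

end

/-- Compatibility of the two equations for `F`: if `F` is differentiable on an
interval and satisfies `2F + F' − 4tF' − 6t(F')² + 4FF' = 1` there, and the second
equation `(1 − F')² − 4F'(F' + 1)(tF' − F) = 0` holds at one point of the interval,
then the second equation holds on the whole interval. -/
theorem F_equations_compatible (a b : ℝ) (F : ℝ → ℝ)
    (hF : ∀ t ∈ Set.Ioo a b, DifferentiableAt ℝ F t)
    (hA : ∀ t ∈ Set.Ioo a b,
      2 * F t + deriv F t - 4 * t * deriv F t - 6 * t * (deriv F t) ^ 2
        + 4 * F t * deriv F t = 1)
    (t₀ : ℝ) (ht₀ : t₀ ∈ Set.Ioo a b)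
    (hB0 : (1 - deriv F t₀) ^ 2
      - 4 * deriv F t₀ * (deriv F t₀ + 1) * (t₀ * deriv F t₀ - F t₀) = 0) :
    ∀ t ∈ Set.Ioo a b,
      (1 - deriv F t) ^ 2
        - 4 * deriv F t * (deriv F t + 1) * (t * deriv F t - F t) = 0 := by
  have hq (t : ℝ) (ht : t ∈ Ioo a b) : eqA t (F t) (deriv F t) = 0 := sub_eq_zero.2 (hA t ht)
  have hB' (t : ℝ) (ht : t ∈ Ioo a b \ {3 / 4}) :
      HasDerivAt (fun t => eqB t (F t) (deriv F t)) 0 t := by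
    have hQ : eqADerivU t (F t) (deriv F t) ≠ 0 := fun h =>
      ht.2 (eq_three_fourths_of_eqADerivU_deriv_eq_zero isOpen_Ioo hF hq ht.1 h)
    simpa [hq t ht.1] using hasDerivAt_eqB (hF t ht.1).hasDerivAt
      (hasDerivAt_deriv_of_eqA isOpen_Ioo hF hq ht.1 hQ)
  have hB : ContinuousOn (fun t => eqB t (F t) (deriv F t)) (Ioo a b) := fun t ht => by
    have hFc := (hF t ht).continuousAt
    have hF'c := continuousAt_deriv_of_eqA isOpen_Ioo hF hq ht
    unfold eqB; fun_prop
  intro t ht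
  exact (eq_of_hasDerivAt_zero_off_countable ordConnected_Ioo (countable_singleton _) hB hB'
    ht ht₀).trans hB0
end

section
/- Given the forward relation q_{n+1} + t/q_n = (1+n)/p_{n+1} and the backward relation q_{n-1} = t/(n/p_n − q_n), together with the recurrence p_{n+1} = (q_n²/t)(p_n − 1) − (v q_n/t) + 1, the variables q satisfy the alternate discrete Painlevé II equation: (1+n)/(q_n q_{n+1} + t) + n/(q_n q_{n-1} + t) = 1/q_n − q_n/t + (n − v)/t. -/
/-! Each term on the left collapses once the denominator is rewritten by its relation:
the forward relation gives `q_n q_{n+1} + t = (1+n) q_n / p_{n+1}` and the backward relation gives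
`q_n q_{n-1} + t = t n / (n - q_n p_n)`. The left side is thus `p_{n+1}/q_n + (n - q_n p_n)/t`,
and substituting the recurrence for `p_{n+1}` eliminates `p_n`. -/

section

variable {K : Type*} [Field K] {m p q q' t : K}

lemma div_mul_add_eq_of_add_div_eq (hm : m ≠ 0) (hq : q ≠ 0) (h : q' + t / q = m / p) :
    m / (q * q' + t) = p / q := by
  have hden : q * q' + t = q * m / p := by
    rw [mul_div_assoc, ← h, mul_add, mul_div_cancel₀ t hq]
  -- for `p = 0` both sides are `0`, since `x / 0 = 0`
  rw [hden, div_div_eq_mul_div, mul_comm m p, mul_div_mul_right p q hm]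

lemma div_mul_add_eq_of_eq_div_sub (hd : m / p - q ≠ 0) (h : q' = t / (m / p - q))
    (hden : q * q' + t ≠ 0) : m / (q * q' + t) = (m - q * p) / t := by
  have hden' : q * q' + t = t * (m / p) / (m / p - q) := by
    rw [h]
    field_simp
    ring
  rw [hden'] at hden ⊢
  obtain ⟨⟨ht, hm, hp⟩, -⟩ : (t ≠ 0 ∧ m ≠ 0 ∧ p ≠ 0) ∧ m / p - q ≠ 0 := by
    simpa only [div_ne_zero_iff, mul_ne_zero_iff] using hden
  field_simp

end

theorem alternate_discrete_PII_general (n : ℕ) (t v pn pn1 qnm qn qn1 : ℝ)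
    (ht : t ≠ 0) (hqn : qn ≠ 0)
    (hd2 : qn * qnm + t ≠ 0)
    (hd3 : (n : ℝ) / pn - qn ≠ 0)
    (hp : pn1 = qn ^ 2 / t * (pn - 1) - v * qn / t + 1)
    (hfwd : qn1 + t / qn = (1 + n) / pn1)
    (hbwd : qnm = t / ((n : ℝ) / pn - qn)) :
    (1 + n) / (qn * qn1 + t) + n / (qn * qnm + t)
      = 1 / qn - qn / t + ((n : ℝ) - v) / t := by
  rw [div_mul_add_eq_of_add_div_eq (by positivity) hqn hfwd,
    div_mul_add_eq_of_eq_div_sub hd3 hbwd hd2, hp]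
  field_simp
  ring

/-- The alternate discrete Painlevé II equation: given the recurrence
`p_{n+1} = (q_n²/t)(p_n − 1) − v q_n/t + 1`, the forward relation
`q_{n+1} + t/q_n = (1+n)/p_{n+1}` and the backward relation
`q_{n-1} = t/(n/p_n − q_n)`, one has
`(1+n)/(q_n q_{n+1} + t) + n/(q_n q_{n-1} + t) = 1/q_n − q_n/t + (n − v)/t`. -/
theorem alternate_discrete_PII (n : ℕ) (t v pn pn1 qnm qn qn1 : ℝ)
    (ht : t ≠ 0) (hqn : qn ≠ 0) (hpn : pn ≠ 0) (hpn1 : pn1 ≠ 0)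
    (hd1 : qn * qn1 + t ≠ 0) (hd2 : qn * qnm + t ≠ 0)
    (hd3 : (n : ℝ) / pn - qn ≠ 0)
    (hp : pn1 = qn ^ 2 / t * (pn - 1) - v * qn / t + 1)
    (hfwd : qn1 + t / qn = (1 + n) / pn1)
    (hbwd : qnm = t / ((n : ℝ) / pn - qn)) :
    (1 + n) / (qn * qn1 + t) + n / (qn * qnm + t)
      = 1 / qn - qn / t + ((n : ℝ) - v) / t :=
  alternate_discrete_PII_general n t v pn pn1 qnm qn qn1 ht hqn hd2 hd3 hp hfwd hbwd
end
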